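/- arXiv:2010.01196 — 3 statements merged into one kernel-verified Lean document; each statement's English description precedes it below -/
import Mathlib

section
/- Let α be a finite type. Then there exists a function f : α → α → ℕ such that for all i, j, k, l ∈ α, f i j + f j i = f k l + f l k if and only if (i = k and j = l) or (i = l and j = k). (This is Lemma B.1 of the paper, i.e. the claim that symmetrized Janossy pooling over the two orderings of a bond is expressive enough to distinguish bonds consisting of distinct pairs of atom embeddings.) -/
/-- Lemma B.1: over a finite type of atom embeddings, there is a function whose
symmetrized Janossy pooling `f i j + f j i` is a complete invariant of the
unordered pair `{i, j}`. -/
theorem janossy_pooling_bond_expressive (α : Type*) [Fintype α] :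
    ∃ f : α → α → ℕ, ∀ i j k l : α,
      f i j + f j i = f k l + f l k ↔ (i = k ∧ j = l) ∨ (i = l ∧ j = k) := by
  classical
  let e := Fintype.equivFin (Sym2 α)
  refine ⟨fun i j => (e s(i, j) : ℕ), fun i j k l => ?_⟩
  have hsw : ∀ a b : α, s(a, b) = s(b, a) := fun a b => Sym2.eq_swap
  dsimp only
  constructor
  · intro h
    rw [hsw j i, hsw l k] at h
    have : (e s(i, j) : ℕ) = (e s(k, l) : ℕ) := by omega
    have := e.injective (Fin.ext this)
    rwa [Sym2.eq_iff] at this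
  · intro h
    have : s(i, j) = s(k, l) := Sym2.eq_iff.mpr h
    rw [hsw j i, hsw l k, this]
end

section
/- Let α be a finite type. Then there exists a function f : α → α → α → ℕ such that for all i, j, k and l, m, n in α, f i j k + f k j i = f l m n + f n m l if and only if (i = l and j = m and k = n) or (i = n and j = m and k = l). (This is the angle analogue of Lemma B.1: symmetrized Janossy pooling over the two admissible orderings of an angle's three atoms distinguishes angles consisting of distinct atom-embedding triples, up to reversal.) -/
/-- Angle analogue of Lemma B.1: symmetrized Janossy pooling over the two admissible
orderings of an angle's three atoms distinguishes angles consisting of distinct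
atom-embedding triples, up to reversal. -/
theorem janossy_pooling_angle_expressive (α : Type*) [Fintype α] :
    ∃ f : α → α → α → ℕ, ∀ i j k l m n : α,
      f i j k + f k j i = f l m n + f n m l ↔
        (i = l ∧ j = m ∧ k = n) ∨ (i = n ∧ j = m ∧ k = l) := by
  classical
  obtain ⟨g, hg⟩ := Countable.exists_injective_nat (α × Sym2 α)
  refine ⟨fun i j k => g (j, s(i, k)), fun i j k l m n => ?_⟩
  have hsym : ∀ a b : α, s(a, b) = s(b, a) := fun a b => Sym2.eq_swap
  beta_reduce
  rw [hsym k, hsym n]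
  constructor
  · intro h
    have : (j, s(i, k)) = (m, s(l, n)) := hg (by omega)
    have h1 : j = m := (Prod.mk.injEq _ _ _ _ ▸ this).1
    have h2 : s(i, k) = s(l, n) := (Prod.mk.injEq _ _ _ _ ▸ this).2
    rw [Sym2.eq_iff] at h2
    tauto
  · intro h
    rcases h with ⟨h1, h2, h3⟩ | ⟨h1, h2, h3⟩
    · subst h1; subst h2; subst h3; rfl
    · subst h1; subst h2; subst h3; rw [hsym]
end

section
/- Let α be a finite type. Then there exists a function f : α → α → α → α → ℕ such that for all quadruples (i, j, k, l) and (i', j', k', l') in α⁴, f i j k l + f l k j i = f i' j' k' l' + f l' k' j' i' if and only if (i, j, k, l) = (i', j', k', l') or (i, j, k, l) = (l', k', j', i'). (This is the proper-torsion analogue of Lemma B.1: symmetrized Janossy pooling over the two admissible orderings of a torsion's four atoms distinguishes torsions consisting of distinct atom-embedding quadruples, up to reversal.) -/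
/-- Proper-torsion analogue of Lemma B.1: symmetrized Janossy pooling over the two
admissible orderings of a torsion's four atoms distinguishes torsions consisting of
distinct atom-embedding quadruples, up to reversal. -/
theorem janossy_pooling_torsion_expressive (α : Type*) [Fintype α] :
    ∃ f : α → α → α → α → ℕ, ∀ i j k l i' j' k' l' : α,
      f i j k l + f l k j i = f i' j' k' l' + f l' k' j' i' ↔
        (i = i' ∧ j = j' ∧ k = k' ∧ l = l') ∨
        (i = l' ∧ j = k' ∧ k = j' ∧ l = i') := by
  classical
  set e : α → ℕ := fun x => (Fintype.equivFin α x : ℕ) with he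
  have einj : Function.Injective e := by
    intro x y h
    have := Fin.val_injective h
    exact (Fintype.equivFin α).injective this
  set c : α → α → α → α → ℕ :=
    fun i j k l => Nat.pair (Nat.pair (e i) (e j)) (Nat.pair (e k) (e l)) with hc
  have cinj : ∀ i j k l i' j' k' l',
      c i j k l = c i' j' k' l' → i = i' ∧ j = j' ∧ k = k' ∧ l = l' := by
    intro i j k l i' j' k' l' h
    simp only [hc, Nat.pair_eq_pair] at h
    exact ⟨einj h.1.1, einj h.1.2, einj h.2.1, einj h.2.2⟩
  refine ⟨fun i j k l => Nat.pair (min (c i j k l) (c l k j i))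
      (max (c i j k l) (c l k j i)), fun i j k l i' j' k' l' => ?_⟩
  constructor
  · intro h
    beta_reduce at h
    have h2 : Nat.pair (min (c i j k l) (c l k j i)) (max (c i j k l) (c l k j i)) =
        Nat.pair (min (c i' j' k' l') (c l' k' j' i')) (max (c i' j' k' l') (c l' k' j' i')) := by
      rw [min_comm (c l k j i), max_comm (c l k j i),
        min_comm (c l' k' j' i'), max_comm (c l' k' j' i')] at h
      omega
    rw [Nat.pair_eq_pair] at h2
    have : (c i j k l = c i' j' k' l' ∧ c l k j i = c l' k' j' i') ∨
        (c i j k l = c l' k' j' i' ∧ c l k j i = c i' j' k' l') := by omega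
    rcases this with ⟨h1, _⟩ | ⟨h1, _⟩
    · exact Or.inl (cinj _ _ _ _ _ _ _ _ h1)
    · exact Or.inr (cinj _ _ _ _ _ _ _ _ h1)
  · rintro (⟨rfl, rfl, rfl, rfl⟩ | ⟨rfl, rfl, rfl, rfl⟩)
    · rfl
    · beta_reduce
      rw [min_comm (c i j k l), max_comm (c i j k l)]
end
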